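/- arXiv:2509.08466 — 2 statements merged into one kernel-verified Lean document; each statement's English description precedes it below -/
import Mathlib

section
/- Let μ be a σ-finite Borel measure on [0,∞), V a separable Hilbert space, η ∈ ℝ and δ' < δ. Then for every strongly measurable y : [0,∞) → V with |||y|||_{δ,η} < ∞ and every t > 0: ∫_{(0,∞)} e^{−2xt} ‖y(x)‖_V² w_{δ',η}(x) μ(dx) ≤ max{1, C(δ−δ')} · (max(1,t))^{−(δ−δ')} · |||y|||_{δ,η}², where C(ϱ) = 2^{−ϱ} ϱ^{ϱ} e^{−ϱ}. (This expresses the rate of convergence ‖S(t) − S_∞‖ ≤ max{1, C(δ−δ')}^{1/2} (max(1,t))^{−(δ−δ')/2} of the multiplication semigroup S(t)y(x) = e^{−xt} y(x) measured from the weighted space with weight w_{δ,η} into the one with weight w_{δ',η}.) -/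
open MeasureTheory Set

/-- The weight function `w_{δ,η}` on `[0,∞)`: `w_{δ,η}(0) = 1`, `w_{δ,η}(x) = x^{−δ}` for
`x ∈ (0,1]` and `w_{δ,η}(x) = x^{η}` for `x ∈ (1,∞)`. -/
noncomputable def weightW (δ η x : ℝ) : ℝ :=
  if x = 0 then 1 else if x ≤ 1 then x ^ (-δ) else x ^ η

/-- The constant `C(ϱ) = 2^{−ϱ} ϱ^{ϱ} e^{−ϱ}`. -/
noncomputable def constC (ϱ : ℝ) : ℝ := 2 ^ (-ϱ) * ϱ ^ ϱ * Real.exp (-ϱ)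

/-!
For `x > 0` one has `w_{δ',η}(x) = min(x,1)^ϱ · w_{δ,η}(x)` with `ϱ = δ - δ'`, so everything reduces
to the uniform bound `e^{-2xt} min(x,1)^ϱ ≤ max{1, C(ϱ)} · max(1,t)^{-ϱ}`. For `t ≤ 1` both factors
are at most `1`. For `t ≥ 1` put `u = min(x,1)`: then `e^{-2xt} u^ϱ ≤ e^{-2ut} u^ϱ
= (2t)^{-ϱ} s^ϱ e^{-s}` with `s = 2ut`, and `s^ϱ e^{-s}` is maximal at `s = ϱ`, giving `C(ϱ) t^{-ϱ}`.
-/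

namespace Real

theorem rpow_mul_exp_neg_le {ρ s : ℝ} (hρ : 0 < ρ) (hs : 0 ≤ s) :
    s ^ ρ * exp (-s) ≤ ρ ^ ρ * exp (-ρ) := by
  have hbase : s / ρ ≤ exp (s / ρ - 1) := by linarith [add_one_le_exp (s / ρ - 1)]
  have hpow : (s / ρ) ^ ρ ≤ exp (s - ρ) := by
    calc (s / ρ) ^ ρ ≤ exp (s / ρ - 1) ^ ρ := by gcongr
      _ = exp (s - ρ) := by rw [← exp_mul]; congr 1; field_simp
  calc s ^ ρ * exp (-s) = ρ ^ ρ * (s / ρ) ^ ρ * exp (-s) := by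
        rw [div_rpow hs hρ.le, mul_div_cancel₀ _ (rpow_pos_of_pos hρ ρ).ne']
    _ ≤ ρ ^ ρ * exp (s - ρ) * exp (-s) := by gcongr
    _ = ρ ^ ρ * exp (-ρ) := by rw [mul_assoc, ← exp_add]; ring_nf

end Real

open Real

theorem exp_neg_two_mul_mul_rpow_le_constC {ρ t x : ℝ} (hρ : 0 < ρ) (ht : 0 < t) (hx : 0 ≤ x) :
    exp (-2 * x * t) * x ^ ρ ≤ constC ρ * t ^ (-ρ) := by
  have htρ : 0 < t ^ ρ := rpow_pos_of_pos ht ρ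
  have h2ρ : (0 : ℝ) < 2 ^ ρ := rpow_pos_of_pos two_pos ρ
  rw [← mul_le_mul_iff_of_pos_right (mul_pos h2ρ htρ)]
  calc exp (-2 * x * t) * x ^ ρ * (2 ^ ρ * t ^ ρ)
      = (2 * x * t) ^ ρ * exp (-(2 * x * t)) := by
        rw [mul_rpow (by positivity) ht.le, mul_rpow zero_le_two hx]; ring_nf
    _ ≤ ρ ^ ρ * exp (-ρ) := rpow_mul_exp_neg_le hρ (by positivity)
    _ = constC ρ * t ^ (-ρ) * (2 ^ ρ * t ^ ρ) := by
        rw [constC, rpow_neg zero_le_two, rpow_neg ht.le]; field_simp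

theorem exp_neg_two_mul_mul_min_rpow_le {ρ t x : ℝ} (hρ : 0 < ρ) (ht : 0 < t) (hx : 0 ≤ x) :
    exp (-2 * x * t) * min x 1 ^ ρ ≤ max 1 (constC ρ) * max 1 t ^ (-ρ) := by
  have hmin : 0 ≤ min x 1 := le_min hx zero_le_one
  rcases le_total t 1 with ht1 | ht1
  · have hexp : exp (-2 * x * t) ≤ 1 := exp_le_one_iff.mpr (by nlinarith)
    have hpow : min x 1 ^ ρ ≤ 1 := rpow_le_one hmin (min_le_right x 1) hρ.le
    rw [max_eq_left ht1, one_rpow, mul_one]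
    calc exp (-2 * x * t) * min x 1 ^ ρ ≤ 1 * 1 := by gcongr
      _ ≤ max 1 (constC ρ) := by rw [one_mul]; exact le_max_left _ _
  · rw [max_eq_right ht1]
    calc exp (-2 * x * t) * min x 1 ^ ρ ≤ exp (-2 * min x 1 * t) * min x 1 ^ ρ := by
          gcongr ?_ * _
          exact exp_le_exp.mpr (by nlinarith [min_le_left x 1])
      _ ≤ constC ρ * t ^ (-ρ) := exp_neg_two_mul_mul_rpow_le_constC hρ ht hmin
      _ ≤ max 1 (constC ρ) * t ^ (-ρ) := by gcongr; exact le_max_right _ _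

theorem weightW_pos (δ η : ℝ) {x : ℝ} (hx : 0 ≤ x) : 0 < weightW δ η x := by
  rcases hx.eq_or_lt with rfl | hx
  · simp [weightW]
  · unfold weightW
    split_ifs <;> first | exact one_pos | exact rpow_pos_of_pos hx _

theorem weightW_eq_min_rpow_mul (δ δ' η : ℝ) {x : ℝ} (hx : 0 < x) :
    weightW δ' η x = min x 1 ^ (δ - δ') * weightW δ η x := by
  rcases le_or_gt x 1 with hx1 | hx1
  · simp only [weightW, hx.ne', hx1, min_eq_left, if_false, if_true]
    rw [← rpow_add hx]; ring_nf
  · simp [weightW, hx.ne', hx1.not_ge, min_eq_right hx1.le]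

theorem exp_neg_two_mul_mul_weightW_le {δ δ' : ℝ} (η : ℝ) (hδ : δ' < δ) {t x : ℝ} (ht : 0 < t)
    (hx : 0 < x) :
    exp (-2 * x * t) * weightW δ' η x ≤
      max 1 (constC (δ - δ')) * max 1 t ^ (-(δ - δ')) * weightW δ η x := by
  rw [weightW_eq_min_rpow_mul δ δ' η hx, ← mul_assoc]
  exact mul_le_mul_of_nonneg_right (exp_neg_two_mul_mul_min_rpow_le (sub_pos.mpr hδ) ht hx.le)
    (weightW_pos δ η hx.le).le

theorem setIntegral_le_mul_setIntegral_of_le_mul {X : Type*} [MeasurableSpace X] {μ : Measure X}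
    {s t : Set X} {f g : X → ℝ} {M : ℝ} (hM : 0 ≤ M) (hst : s ⊆ t) (ht : MeasurableSet t)
    (hf : ∀ x ∈ s, 0 ≤ f x) (hg : ∀ x ∈ t, 0 ≤ g x) (hfg : ∀ x ∈ s, f x ≤ M * g x)
    (hgi : IntegrableOn g t μ) :
    ∫ x in s, f x ∂μ ≤ M * ∫ x in t, g x ∂μ := by
  have hMgi : IntegrableOn (fun x => M * g x) t μ := hgi.const_mul M
  rw [← integral_const_mul]
  calc ∫ x in s, f x ∂μ ≤ ∫ x in s, M * g x ∂μ :=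
        setIntegral_mono_of_nonneg hf hfg (hMgi.mono_set hst)
    _ ≤ ∫ x in t, M * g x ∂μ := by
        refine setIntegral_mono_set hMgi ?_ hst.eventuallyLE
        filter_upwards [self_mem_ae_restrict ht] with x hx
        exact mul_nonneg hM (hg x hx)

theorem multiplication_semigroup_convergence_rate_general
    {V : Type*} [NormedAddCommGroup V]
    (μ : Measure ℝ)
    (η δ δ' : ℝ) (hδ : δ' < δ)
    (y : ℝ → V)
    (hfin : IntegrableOn (fun x => ‖y x‖ ^ 2 * weightW δ η x) (Set.Ici 0) μ)
    (t : ℝ) (ht : 0 < t) :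
    (∫ x in Set.Ioi (0 : ℝ), Real.exp (-2 * x * t) * ‖y x‖ ^ 2 * weightW δ' η x ∂μ) ≤
      max 1 (constC (δ - δ')) * (max 1 t) ^ (-(δ - δ')) *
        ∫ x in Set.Ici (0 : ℝ), ‖y x‖ ^ 2 * weightW δ η x ∂μ := by
  refine setIntegral_le_mul_setIntegral_of_le_mul (by positivity) Ioi_subset_Ici_self
    measurableSet_Ici (fun x hx => ?_) (fun x hx => ?_) (fun x hx => ?_) hfin
  · have := weightW_pos δ' η (le_of_lt hx)
    positivity
  · have := weightW_pos δ η hx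
    positivity
  · calc exp (-2 * x * t) * ‖y x‖ ^ 2 * weightW δ' η x
        = ‖y x‖ ^ 2 * (exp (-2 * x * t) * weightW δ' η x) := by ring
      _ ≤ ‖y x‖ ^ 2 * (max 1 (constC (δ - δ')) * max 1 t ^ (-(δ - δ')) * weightW δ η x) := by
        exact mul_le_mul_of_nonneg_left (exp_neg_two_mul_mul_weightW_le η hδ ht hx)
          (sq_nonneg _)
      _ = _ := by ring

/-- Let `μ` be a σ-finite Borel measure on `[0,∞)`, `V` a separable Hilbert
space, `η ∈ ℝ` and `δ' < δ`.  Then for every strongly measurable `y : [0,∞) → V` with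
`|||y|||_{δ,η} < ∞` and every `t > 0`:
`∫_{(0,∞)} e^{−2xt} ‖y(x)‖² w_{δ',η}(x) μ(dx)
  ≤ max{1, C(δ−δ')} · (max(1,t))^{−(δ−δ')} · |||y|||_{δ,η}²`. -/
theorem multiplication_semigroup_convergence_rate
    {V : Type*} [NormedAddCommGroup V] [InnerProductSpace ℝ V]
    [SecondCountableTopology V] [CompleteSpace V]
    (μ : Measure ℝ) [SigmaFinite μ]
    (η δ δ' : ℝ) (hδ : δ' < δ)
    (y : ℝ → V) (hy : StronglyMeasurable y)
    (hfin : IntegrableOn (fun x => ‖y x‖ ^ 2 * weightW δ η x) (Set.Ici 0) μ)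
    (t : ℝ) (ht : 0 < t) :
    (∫ x in Set.Ioi (0 : ℝ), Real.exp (-2 * x * t) * ‖y x‖ ^ 2 * weightW δ' η x ∂μ) ≤
      max 1 (constC (δ - δ')) * (max 1 t) ^ (-(δ - δ')) *
        ∫ x in Set.Ici (0 : ℝ), ‖y x‖ ^ 2 * weightW δ η x ∂μ :=
  multiplication_semigroup_convergence_rate_general μ η δ δ' hδ y hfin t ht
end

section
/- Let δ ≥ 0 and η ≥ 0, and let (y, y') be as in the context with N_{δ,η}(y) < ∞. Then the shift semigroup is strongly continuous at the origin on the modified Filipović space, i.e. lim_{t→0⁺} ( ‖y(1+t) − y(1)‖_V² + ∫_0^∞ ‖y'(x+t) − y'(x)‖_V² v_{δ,η}(x) dx ) = 0. -/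
/-!
Put `s = √v_{δ,η}` and `G = 𝟙_{(0,∞)} · s y'`, so that `N_{δ,η}(y) < ∞` says `G ∈ L²(ℝ; V)`.
For `x, t > 0`,
`s(x) (y'(x+t) - y'(x)) = (G(x+t) - G(x)) - (s(x+t) - s(x)) y'(x+t)`,
so the weighted integral is at most `2‖G(· + t) - G‖²_{L²}` plus twice
`∫_{u>t} (s(u) - s(u-t))² ‖y'(u)‖² du`. The first term tends to `0` by continuity of
translation in `L²`; the second by dominated convergence, since `s ≥ 0` is continuous and
nondecreasing on `(0,∞)`, so that `(s(u) - s(u-t))² ≤ s(u)²`. The boundary term tends to `0`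
by continuity of the primitive of `y'`.
-/

open MeasureTheory Set Filter

/-- The weight function `v_{δ,η}` on `(0,∞)`: `v_{δ,η}(x) = x^{η}` for `x ∈ (0,1]` and
`v_{δ,η}(x) = x^{δ}` for `x ∈ (1,∞)`. -/
noncomputable def weightV (δ η x : ℝ) : ℝ :=
  if x ≤ 1 then x ^ η else x ^ δ

open scoped ENNReal Topology

lemma weightV_pos {δ η x : ℝ} (hx : 0 < x) : 0 < weightV δ η x := by
  unfold weightV; split <;> exact Real.rpow_pos_of_pos hx _

lemma monotoneOn_weightV {δ η : ℝ} (hδ : 0 ≤ δ) (hη : 0 ≤ η) :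
    MonotoneOn (weightV δ η) (Ioi 0) := by
  intro a (ha : 0 < a) b _ hab
  unfold weightV
  split_ifs with ha1 hb1 hb1
  · exact Real.rpow_le_rpow ha.le hab hη
  · exact (Real.rpow_le_one ha.le ha1 hη).trans (Real.one_le_rpow (by linarith) hδ)
  · linarith
  · exact Real.rpow_le_rpow ha.le hab hδ

lemma continuous_weightV {δ η : ℝ} (hδ : 0 ≤ δ) (hη : 0 ≤ η) :
    Continuous (weightV δ η) :=
  (Real.continuous_rpow_const hη).if_le (Real.continuous_rpow_const hδ) continuous_id
    continuous_const fun x hx => by simp [hx]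

theorem MeasureTheory.MemLp.integral_norm_sq_eq {α E : Type*} [MeasurableSpace α] {μ : Measure α}
    [NormedAddCommGroup E] {f : α → E} (hf : MemLp f 2 μ) :
    ∫ x, ‖f x‖ ^ 2 ∂μ = (eLpNorm f 2 μ).toReal ^ 2 := by
  rw [toReal_eLpNorm hf.aestronglyMeasurable,
    lpNorm_eq_integral_norm_rpow_toReal two_ne_zero ENNReal.ofNat_ne_top hf.aestronglyMeasurable]
  simp only [ENNReal.toReal_ofNat, Real.rpow_two]
  exact_mod_cast
    (Real.rpow_inv_natCast_pow (integral_nonneg fun x => sq_nonneg ‖f x‖) two_ne_zero).symm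

section Translation

variable {X E : Type*} [AddGroup X] [TopologicalSpace X] [IsTopologicalAddGroup X]
  [MeasurableSpace X] [BorelSpace X] [NormedAddCommGroup E] {μ : Measure X}
  [μ.IsAddRightInvariant] [IsLocallyFiniteMeasure μ] [μ.InnerRegularCompactLTTop]

theorem MeasureTheory.MemLp.tendsto_eLpNorm_comp_add_right_sub {p : ℝ≥0∞} [Fact (1 ≤ p)]
    (hp : p ≠ ∞) {f : X → E} (hf : MemLp f p μ) :
    Tendsto (fun t => eLpNorm (fun x => f (x + t) - f x) p μ) (𝓝 0) (𝓝 0) := by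
  let τ : C(X, C(X, X)) := ContinuousMap.curry ⟨fun q : X × X => q.2 + q.1, by fun_prop⟩
  have hτ : ∀ t, MeasurePreserving (τ t) μ μ := fun t => measurePreserving_add_right μ t
  have h := (tendsto_const_nhds (x := hf.toLp f)).compMeasurePreservingLp
    (τ.continuous.tendsto 0) hτ (hτ 0) hp
  rw [Lp.tendsto_Lp_iff_tendsto_eLpNorm'] at h
  refine h.congr fun t => eLpNorm_congr_ae ?_
  have hcomp : ∀ t, (Lp.compMeasurePreserving (τ t) (hτ t) (hf.toLp f) : X → E) =ᵐ[μ]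
      fun x => f (x + t) :=
    fun t => (Lp.coeFn_compMeasurePreserving _ _).trans
      ((hτ t).quasiMeasurePreserving.ae_eq_comp hf.coeFn_toLp)
  filter_upwards [hcomp t, hcomp 0] with x hxt hx0
  rw [Pi.sub_apply, hxt, hx0, add_zero]

theorem MeasureTheory.MemLp.tendsto_integral_norm_comp_add_right_sub_sq {f : X → E}
    (hf : MemLp f 2 μ) :
    Tendsto (fun t => ∫ x, ‖f (x + t) - f x‖ ^ 2 ∂μ) (𝓝 0) (𝓝 0) := by
  have h := ((ENNReal.tendsto_toReal ENNReal.zero_ne_top).comp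
    (hf.tendsto_eLpNorm_comp_add_right_sub ENNReal.ofNat_ne_top)).pow 2
  rw [ENNReal.toReal_zero, zero_pow two_ne_zero] at h
  refine h.congr fun t => ?_
  exact (MemLp.integral_norm_sq_eq
    ((hf.comp_measurePreserving (measurePreserving_add_right μ t)).sub hf)).symm

end Translation

theorem MeasureTheory.memLp_two_indicator_smul {α V : Type*} [MeasurableSpace α] {μ : Measure α}
    [NormedAddCommGroup V] [NormedSpace ℝ V] {A : Set α} (hA : MeasurableSet A)
    {s : α → ℝ} {f : α → V} (hs : AEStronglyMeasurable s (μ.restrict A))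
    (hf : AEStronglyMeasurable f (μ.restrict A))
    (hsf : IntegrableOn (fun x => s x ^ 2 * ‖f x‖ ^ 2) A μ) :
    MemLp (A.indicator fun x => s x • f x) 2 μ := by
  rw [memLp_indicator_iff_restrict hA]
  refine (memLp_two_iff_integrable_sq_norm (hs.smul hf)).2 <| hsf.congr (.of_forall fun x => ?_)
  simp only [Pi.smul_apply', norm_smul, mul_pow, Real.norm_eq_abs, sq_abs]

lemma setIntegral_Ioi_comp_add_right {E : Type*} [NormedAddCommGroup E] [NormedSpace ℝ E]
    (f : ℝ → E) (a t : ℝ) : ∫ x in Ioi a, f (x + t) = ∫ x in Ioi (a + t), f x := by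
  simpa using (measurePreserving_add_right volume t).setIntegral_preimage_emb
    (measurableEmbedding_addRight t) f (Ioi (a + t))

lemma integrableOn_Ioi_comp_add_right {E : Type*} [NormedAddCommGroup E] {f : ℝ → E} {a t : ℝ} :
    IntegrableOn (fun x => f (x + t)) (Ioi a) ↔ IntegrableOn f (Ioi (a + t)) := by
  simpa [Function.comp_def] using (measurePreserving_add_right volume t).integrableOn_comp_preimage
    (measurableEmbedding_addRight t) (f := f) (s := Ioi (a + t))

lemma norm_smul_sub_sq_le {V : Type*} [NormedAddCommGroup V] [NormedSpace ℝ V]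
    (s₀ s₁ : ℝ) (a b : V) :
    ‖s₀ • (b - a)‖ ^ 2 ≤ 2 * ‖s₁ • b - s₀ • a‖ ^ 2 + 2 * ((s₁ - s₀) ^ 2 * ‖b‖ ^ 2) := by
  have hsplit : s₀ • (b - a) = (s₁ • b - s₀ • a) - (s₁ - s₀) • b := by module
  calc ‖s₀ • (b - a)‖ ^ 2 ≤ (‖s₁ • b - s₀ • a‖ + ‖(s₁ - s₀) • b‖) ^ 2 :=
        pow_le_pow_left₀ (norm_nonneg _) (hsplit ▸ norm_sub_le _ _) 2
    _ ≤ 2 * (‖s₁ • b - s₀ • a‖ ^ 2 + ‖(s₁ - s₀) • b‖ ^ 2) := add_sq_le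
    _ = 2 * ‖s₁ • b - s₀ • a‖ ^ 2 + 2 * ((s₁ - s₀) ^ 2 * ‖b‖ ^ 2) := by
        rw [norm_smul, mul_pow, Real.norm_eq_abs, sq_abs]; ring

lemma setIntegral_Ioi_norm_comp_add_sub_sq_mul_sq_le {V : Type*} [NormedAddCommGroup V]
    [NormedSpace ℝ V] {s : ℝ → ℝ} {f : ℝ → V}
    (hG : MemLp ((Ioi 0).indicator fun x => s x • f x) 2 volume) {t : ℝ} (ht : 0 < t)
    (hcorr : IntegrableOn (fun u => (s u - s (u - t)) ^ 2 * ‖f u‖ ^ 2) (Ioi t)) :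
    ∫ x in Ioi 0, ‖f (x + t) - f x‖ ^ 2 * s x ^ 2 ≤
      2 * (∫ x, ‖(Ioi 0).indicator (fun x => s x • f x) (x + t) -
          (Ioi 0).indicator (fun x => s x • f x) x‖ ^ 2) +
        2 * ∫ u in Ioi t, (s u - s (u - t)) ^ 2 * ‖f u‖ ^ 2 := by
  set G := (Ioi 0).indicator fun x => s x • f x
  have hdiff : Integrable (fun x => ‖G (x + t) - G x‖ ^ 2) := by
    have h := (hG.comp_measurePreserving (measurePreserving_add_right volume t)).sub hG
    exact (memLp_two_iff_integrable_sq_norm h.1).1 h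
  have hcorr' : IntegrableOn (fun x => (s (x + t) - s x) ^ 2 * ‖f (x + t)‖ ^ 2) (Ioi 0) := by
    have h := integrableOn_Ioi_comp_add_right.2 (by rwa [zero_add] : IntegrableOn _ (Ioi (0 + t)))
    simpa only [add_sub_cancel_right] using h
  calc ∫ x in Ioi 0, ‖f (x + t) - f x‖ ^ 2 * s x ^ 2
      ≤ ∫ x in Ioi 0, (2 * ‖G (x + t) - G x‖ ^ 2 +
          2 * ((s (x + t) - s x) ^ 2 * ‖f (x + t)‖ ^ 2)) := by
        refine integral_mono_of_nonneg (.of_forall fun x => by positivity)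
          ((hdiff.integrableOn.const_mul 2).add (hcorr'.const_mul 2)) ?_
        filter_upwards [ae_restrict_mem measurableSet_Ioi] with x (hx : 0 < x)
        have hG_eq : ∀ y, 0 < y → G y = s y • f y := fun y hy => indicator_of_mem hy _
        rw [hG_eq x hx, hG_eq (x + t) (by linarith)]
        refine Eq.trans_le ?_ (norm_smul_sub_sq_le (s x) (s (x + t)) (f x) (f (x + t)))
        rw [norm_smul, mul_pow, Real.norm_eq_abs, sq_abs, mul_comm]
    _ = 2 * (∫ x in Ioi 0, ‖G (x + t) - G x‖ ^ 2) +
          2 * ∫ x in Ioi 0, (s (x + t) - s x) ^ 2 * ‖f (x + t)‖ ^ 2 := by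
        rw [integral_add (hdiff.integrableOn.const_mul 2) (hcorr'.const_mul 2),
          integral_const_mul, integral_const_mul]
    _ ≤ _ := by
        have hshift := setIntegral_Ioi_comp_add_right
          (fun u => (s u - s (u - t)) ^ 2 * ‖f u‖ ^ 2) 0 t
        simp only [add_sub_cancel_right, zero_add] at hshift
        rw [hshift]
        gcongr 2 * ?_ + _
        exact setIntegral_le_integral hdiff (.of_forall fun x => by positivity)

lemma sub_comp_sub_sq_le_sq {s : ℝ → ℝ} (hs : MonotoneOn s (Ioi 0)) (hs₀ : 0 ≤ s)
    {t u : ℝ} (ht : 0 < t) (htu : t < u) : (s u - s (u - t)) ^ 2 ≤ s u ^ 2 := by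
  have hle : s (u - t) ≤ s u :=
    hs (mem_Ioi.2 (sub_pos.2 htu)) (mem_Ioi.2 (ht.trans htu)) (by linarith)
  exact pow_le_pow_left₀ (sub_nonneg.2 hle) (sub_le_self _ (hs₀ _)) 2

lemma integrableOn_Ioi_sub_comp_sub_sq_mul {s g : ℝ → ℝ} (hs : MonotoneOn s (Ioi 0))
    (hs₀ : 0 ≤ s) (hsc : Continuous s) (hg₀ : 0 ≤ g)
    (hg : AEStronglyMeasurable g (volume.restrict (Ioi 0)))
    (hsg : IntegrableOn (fun u => s u ^ 2 * g u) (Ioi 0)) {t : ℝ} (ht : 0 < t) :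
    IntegrableOn (fun u => (s u - s (u - t)) ^ 2 * g u) (Ioi t) := by
  refine (hsg.mono_set (Ioi_subset_Ioi ht.le)).mono' ?_ ?_
  · exact (((hsc.sub (hsc.comp (continuous_sub_right t))).pow 2).aestronglyMeasurable.mul
      (hg.mono_measure (Measure.restrict_mono (Ioi_subset_Ioi ht.le) le_rfl)))
  · filter_upwards [ae_restrict_mem measurableSet_Ioi] with u hu
    rw [Real.norm_of_nonneg (mul_nonneg (sq_nonneg _) (hg₀ u))]
    exact mul_le_mul_of_nonneg_right (sub_comp_sub_sq_le_sq hs hs₀ ht hu) (hg₀ u)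

lemma tendsto_setIntegral_Ioi_sub_comp_sub_sq_mul {s g : ℝ → ℝ} (hs : MonotoneOn s (Ioi 0))
    (hs₀ : 0 ≤ s) (hsc : Continuous s) (hg₀ : 0 ≤ g)
    (hg : AEStronglyMeasurable g (volume.restrict (Ioi 0)))
    (hsg : IntegrableOn (fun u => s u ^ 2 * g u) (Ioi 0)) :
    Tendsto (fun t => ∫ u in Ioi t, (s u - s (u - t)) ^ 2 * g u) (𝓝[>] 0) (𝓝 0) := by
  let F : ℝ → ℝ → ℝ := fun t => (Ioi t).indicator fun u => (s u - s (u - t)) ^ 2 * g u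
  have hF : ∀ t > 0, ∫ u in Ioi t, (s u - s (u - t)) ^ 2 * g u = ∫ u in Ioi 0, F t u :=
    fun t ht => by
      rw [integral_indicator measurableSet_Ioi, Measure.restrict_restrict measurableSet_Ioi,
        inter_eq_self_of_subset_left (Ioi_subset_Ioi ht.le)]
  have hlim : Tendsto (fun t => ∫ u in Ioi 0, F t u) (𝓝[>] 0) (𝓝 (∫ u in Ioi (0 : ℝ), 0)) := by
    refine tendsto_integral_filter_of_dominated_convergence (fun u => s u ^ 2 * g u) ?_ ?_ hsg ?_
    · filter_upwards [self_mem_nhdsWithin] with t ht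
      exact ((integrableOn_Ioi_sub_comp_sub_sq_mul hs hs₀ hsc hg₀ hg hsg ht).integrable_indicator
        measurableSet_Ioi).aestronglyMeasurable.restrict
    · filter_upwards [self_mem_nhdsWithin] with t ht
      filter_upwards [ae_restrict_mem measurableSet_Ioi] with u hu
      by_cases htu : t < u
      · simp only [F, indicator_of_mem (mem_Ioi.2 htu)]
        rw [Real.norm_of_nonneg (mul_nonneg (sq_nonneg _) (hg₀ u))]
        exact mul_le_mul_of_nonneg_right (sub_comp_sub_sq_le_sq hs hs₀ ht htu) (hg₀ u)
      · simp only [F, indicator_of_notMem (notMem_Ioi.2 (not_lt.1 htu)), norm_zero]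
        exact mul_nonneg (sq_nonneg _) (hg₀ u)
    · filter_upwards [ae_restrict_mem measurableSet_Ioi] with u (hu : 0 < u)
      have hcont : Tendsto (fun t => (s u - s (u - t)) ^ 2 * g u) (𝓝 0) (𝓝 0) := by
        have := ((continuous_const.sub (hsc.comp (continuous_sub_left u))).pow 2).mul
          continuous_const |>.tendsto (0 : ℝ) (f := fun t => (s u - s (u - t)) ^ 2 * g u)
        simpa using this
      refine (hcont.mono_left nhdsWithin_le_nhds).congr' ?_
      filter_upwards [Ioo_mem_nhdsGT hu] with t ht
      simp only [F, indicator_of_mem (mem_Ioi.2 ht.2)]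
  rw [integral_zero] at hlim
  exact hlim.congr' (eventually_nhdsWithin_of_forall fun t ht => (hF t ht).symm)

lemma tendsto_setIntegral_Ioi_norm_comp_add_sub_sq_mul_sq {V : Type*} [NormedAddCommGroup V]
    [NormedSpace ℝ V] {s : ℝ → ℝ} {f : ℝ → V} (hs : MonotoneOn s (Ioi 0)) (hs₀ : 0 ≤ s)
    (hsc : Continuous s) (hf : AEStronglyMeasurable f (volume.restrict (Ioi 0)))
    (hsf : IntegrableOn (fun x => s x ^ 2 * ‖f x‖ ^ 2) (Ioi 0)) :
    Tendsto (fun t => ∫ x in Ioi 0, ‖f (x + t) - f x‖ ^ 2 * s x ^ 2) (𝓝[>] 0) (𝓝 0) := by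
  have hG := memLp_two_indicator_smul measurableSet_Ioi hsc.aestronglyMeasurable hf hsf
  have htrans := (MemLp.tendsto_integral_norm_comp_add_right_sub_sq hG).mono_left
    (nhdsWithin_le_nhds (s := Ioi 0))
  have hcorr := tendsto_setIntegral_Ioi_sub_comp_sub_sq_mul hs hs₀ hsc
    (fun x => sq_nonneg ‖f x‖) (hf.norm.pow 2) hsf
  refine squeeze_zero' (.of_forall fun t => setIntegral_nonneg measurableSet_Ioi fun x _ =>
    by positivity) ?_ (by simpa using (htrans.const_mul 2).add (hcorr.const_mul 2))
  filter_upwards [self_mem_nhdsWithin] with t (ht : 0 < t)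
  exact setIntegral_Ioi_norm_comp_add_sub_sq_mul_sq_le hG ht
    (integrableOn_Ioi_sub_comp_sub_sq_mul hs hs₀ hsc (fun x => sq_nonneg ‖f x‖)
      (hf.norm.pow 2) hsf ht)

lemma locallyIntegrableOn_Ioi_of_integrableOn_Ioc {E : Type*} [NormedAddCommGroup E]
    {f : ℝ → E} {a : ℝ} (hf : ∀ b c, a < b → IntegrableOn f (Ioc b c)) :
    LocallyIntegrableOn f (Ioi a) := by
  intro x (hx : a < x)
  refine ⟨Ioc ((a + x) / 2) (x + 1), ?_, hf _ _ (by linarith)⟩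
  exact mem_nhdsWithin_of_mem_nhds <|
    mem_of_superset (Ioo_mem_nhds (by linarith) (by linarith)) Ioo_subset_Ioc_self

lemma tendsto_sub_nhdsGT_of_eq_primitive {E : Type*} [NormedAddCommGroup E] [NormedSpace ℝ E]
    {y y' : ℝ → E} {a b : ℝ} (hab : a < b) (hint : IntegrableOn y' (Ioc a b))
    (hy : ∀ c, a ≤ c → y c - y a = ∫ x in a..c, y' x) :
    Tendsto (fun t => y (a + t) - y a) (𝓝[>] 0) (𝓝 0) := by
  have hprim : ContinuousWithinAt (fun c => ∫ x in a..c, y' x) (Icc a b) a := by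
    refine intervalIntegral.continuousWithinAt_primitive (measure_singleton a) ?_
    rwa [min_self, max_eq_right hab.le, intervalIntegrable_iff_integrableOn_Ioc_of_le hab.le]
  have hshift : Tendsto (fun t => a + t) (𝓝[>] 0) (𝓝[Icc a b] a) := by
    refine tendsto_nhdsWithin_iff.2 ⟨?_, ?_⟩
    · simpa using (continuous_const_add a).continuousWithinAt.tendsto (x := (0 : ℝ)) (s := Ioi 0)
    · filter_upwards [Ioo_mem_nhdsGT (sub_pos.2 hab)] with t ht
      constructor <;> linarith [ht.1, ht.2]
  have h := hprim.tendsto.comp hshift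
  rw [intervalIntegral.integral_same] at h
  refine h.congr' ?_
  filter_upwards [self_mem_nhdsWithin] with t (ht : 0 < t)
  exact (hy _ (by linarith)).symm

theorem shift_semigroup_strongly_continuous_general
    {V : Type*} [NormedAddCommGroup V] [InnerProductSpace ℝ V]
    (δ η : ℝ) (hδ : 0 ≤ δ) (hη : 0 ≤ η)
    (y y' : ℝ → V)
    (hloc : ∀ a b : ℝ, 0 < a → IntegrableOn y' (Set.Ioc a b))
    (hftc : ∀ a b : ℝ, 0 < a → a ≤ b → y b - y a = ∫ x in a..b, y' x)
    (hfin : IntegrableOn (fun x => ‖y' x‖ ^ 2 * weightV δ η x) (Set.Ioi 0)) :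
    Tendsto (fun t : ℝ =>
        ‖y (1 + t) - y 1‖ ^ 2
          + ∫ x in Set.Ioi (0 : ℝ), ‖y' (x + t) - y' x‖ ^ 2 * weightV δ η x)
      (nhdsWithin 0 (Set.Ioi 0)) (nhds 0) := by
  set s : ℝ → ℝ := fun x => √(weightV δ η x)
  have hs_sq : ∀ x ∈ Ioi (0 : ℝ), s x ^ 2 = weightV δ η x := fun x hx =>
    Real.sq_sqrt (weightV_pos hx).le
  have hbulk := tendsto_setIntegral_Ioi_norm_comp_add_sub_sq_mul_sq
    (fun a ha b hb hab => Real.sqrt_le_sqrt (monotoneOn_weightV hδ hη ha hb hab))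
    (fun x => Real.sqrt_nonneg _) (continuous_weightV hδ hη).sqrt
    (locallyIntegrableOn_Ioi_of_integrableOn_Ioc hloc).aestronglyMeasurable
    (hfin.congr_fun (fun x hx => by rw [hs_sq x hx, mul_comm]) measurableSet_Ioi)
  have hbdry := tendsto_sub_nhdsGT_of_eq_primitive one_lt_two (hloc 1 2 one_pos)
    fun c hc => hftc 1 c one_pos hc
  have hlim := (hbdry.norm.pow 2).add hbulk
  rw [norm_zero, zero_pow two_ne_zero, zero_add] at hlim
  refine hlim.congr fun t => ?_
  rw [setIntegral_congr_fun measurableSet_Ioi fun x hx => by rw [hs_sq x hx]]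

/-- Let `δ ≥ 0`, `η ≥ 0`, and let `(y,y')` be a pair with `y'` locally
Bochner integrable, `y(b) − y(a) = ∫_a^b y'` and `N_{δ,η}(y) < ∞`.  Then the shift
semigroup is strongly continuous at the origin:
`lim_{t→0⁺} (‖y(1+t) − y(1)‖² + ∫_0^∞ ‖y'(x+t) − y'(x)‖² v_{δ,η}(x) dx) = 0`. -/
theorem shift_semigroup_strongly_continuous
    {V : Type*} [NormedAddCommGroup V] [InnerProductSpace ℝ V]
    [SecondCountableTopology V] [CompleteSpace V]
    (δ η : ℝ) (hδ : 0 ≤ δ) (hη : 0 ≤ η)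
    (y y' : ℝ → V)
    (hloc : ∀ a b : ℝ, 0 < a → IntegrableOn y' (Set.Ioc a b))
    (hftc : ∀ a b : ℝ, 0 < a → a ≤ b → y b - y a = ∫ x in a..b, y' x)
    (hfin : IntegrableOn (fun x => ‖y' x‖ ^ 2 * weightV δ η x) (Set.Ioi 0)) :
    Tendsto (fun t : ℝ =>
        ‖y (1 + t) - y 1‖ ^ 2
          + ∫ x in Set.Ioi (0 : ℝ), ‖y' (x + t) - y' x‖ ^ 2 * weightV δ η x)
      (nhdsWithin 0 (Set.Ioi 0)) (nhds 0) :=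
  shift_semigroup_strongly_continuous_general δ η hδ hη y y' hloc hftc hfin
end
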